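/- arXiv:0705.3106 — 2 statements merged into one kernel-verified Lean document; each statement's English description precedes it below -/
import Mathlib

section
/- Let G be a nonabelian group of exponent 4, let R be a commutative ring with R₂ = {0}, and let σ be a nontrivial orientation homomorphism of G whose kernel N = ker(σ) is an elementary abelian 2-group. Then the set of antisymmetric elements (RG)⁻ under φ_σ is commutative. -/
open Subgroup

/-- The oriented involution `φ_σ` on the group ring `R[G]`, determined by an
orientation homomorphism `σ : G → {±1}`:  `φ_σ (∑ r_g g) = ∑ r_g σ(g) g⁻¹`. -/
noncomputable def phiSigma {R : Type*} [CommRing R] {G : Type*} [Group G]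
    (σ : G →* ℤˣ) (x : MonoidAlgebra R G) : MonoidAlgebra R G :=
  Finsupp.sum x.coeff fun g r => MonoidAlgebra.single g⁻¹ ((σ g : ℤ) • r)

/-- The set of antisymmetric elements `(RG)⁻ = {x | φ_σ(x) = -x}` of the group ring is
commutative. -/
def AntisymmCommute (R : Type*) [CommRing R] (G : Type*) [Group G] (σ : G →* ℤˣ) : Prop :=
  ∀ x y : MonoidAlgebra R G, phiSigma σ x = -x → phiSigma σ y = -y → x * y = y * x

/-!
An antisymmetric `x` satisfies `σ(g) x_g = -x_{g⁻¹}`. Every element of `N = ker σ` is its own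
inverse, so on `N` this reads `2 x_g = 0`, whence `x_g = 0`; off `N` we have `σ = -1`, so
`x_{g⁻¹} = x_g`. For `g, h ∉ N` the element `g⁻¹h⁻¹` lies in `N`, hence equals its inverse `hg`.
Reindexing `xy = ∑ x_g y_h gh` by `g ↦ g⁻¹, h ↦ h⁻¹` therefore turns it into `∑ x_g y_h hg = yx`.
-/

theorem Finsupp.sum_comp_inv {G M N : Type*} [Group G] [Zero M] [AddCommMonoid N]
    {f : G →₀ M} (hf : ∀ g, f g⁻¹ = f g) (F : G → M → N) :
    (f.sum fun g a => F g⁻¹ a) = f.sum F := by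
  have hinv : Finsupp.equivMapDomain (Equiv.inv G) f = f := Finsupp.ext hf
  calc (f.sum fun g a => F g⁻¹ a) = (Finsupp.equivMapDomain (Equiv.inv G) f).sum F := by
        rw [Finsupp.sum_equivMapDomain]; rfl
    _ = f.sum F := by rw [hinv]

theorem MonoidAlgebra.mul_comm_of_coeff_inv {R G : Type*} [CommSemiring R] [Group G]
    {x y : MonoidAlgebra R G} (hx : ∀ g, x.coeff g⁻¹ = x.coeff g)
    (hy : ∀ g, y.coeff g⁻¹ = y.coeff g)
    (hxy : ∀ g ∈ x.coeff.support, ∀ h ∈ y.coeff.support, g⁻¹ * h⁻¹ = h * g) :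
    x * y = y * x :=
  calc x * y = x.coeff.sum fun g a => y.coeff.sum fun h b => single (g⁻¹ * h⁻¹) (a * b) := by
        rw [mul_def, ← Finsupp.sum_comp_inv hx]
        exact Finsupp.sum_congr fun g _ => (Finsupp.sum_comp_inv hy _).symm
    _ = x.coeff.sum fun g a => y.coeff.sum fun h b => single (h * g) (b * a) :=
        Finsupp.sum_congr fun g hg => Finsupp.sum_congr fun h hh => by
          rw [hxy g hg h hh, mul_comm]
    _ = y * x := by rw [mul_def, Finsupp.sum_comm]

section Orientation

variable {G : Type*} [Group G] (σ : G →* ℤˣ)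

theorem map_eq_neg_one_of_notMem_ker {g : G} (hg : g ∉ σ.ker) : σ g = -1 :=
  Int.units_ne_iff_eq_neg.mp (hg ∘ σ.mem_ker.mpr)

theorem inv_eq_self_of_mem_ker (hN : ∀ n ∈ σ.ker, n ^ 2 = 1) {n : G} (hn : n ∈ σ.ker) :
    n⁻¹ = n :=
  inv_eq_of_mul_eq_one_right ((sq n).symm.trans (hN n hn))

theorem inv_mul_inv_eq_mul_of_notMem_ker (hN : ∀ n ∈ σ.ker, n ^ 2 = 1) {g h : G}
    (hg : g ∉ σ.ker) (hh : h ∉ σ.ker) : g⁻¹ * h⁻¹ = h * g := by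
  have hmem : g⁻¹ * h⁻¹ ∈ σ.ker := by
    rw [σ.mem_ker, map_mul, map_inv, map_inv, map_eq_neg_one_of_notMem_ker σ hg,
      map_eq_neg_one_of_notMem_ker σ hh]
    rfl
  calc g⁻¹ * h⁻¹ = (g⁻¹ * h⁻¹)⁻¹ := (inv_eq_self_of_mem_ker σ hN hmem).symm
    _ = h * g := by group

variable {R : Type*} [CommRing R] {x : MonoidAlgebra R G}

theorem phiSigma_coeff (x : MonoidAlgebra R G) (h : G) :
    (phiSigma σ x).coeff h = (σ h⁻¹ : ℤ) • x.coeff h⁻¹ := by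
  classical
  simp only [phiSigma, MonoidAlgebra.coeff_finsuppSum, MonoidAlgebra.coeff_single,
    Finsupp.sum_apply, Finsupp.single_apply, inv_eq_iff_eq_inv]
  rw [Finsupp.sum_ite_eq']
  split_ifs with hh
  · rfl
  · simp [Finsupp.notMem_support_iff.mp hh]

theorem smul_coeff_of_phiSigma_eq_neg (hx : phiSigma σ x = -x) (g : G) :
    (σ g : ℤ) • x.coeff g = -x.coeff g⁻¹ := by
  simpa [phiSigma_coeff] using congrArg (·.coeff g⁻¹) hx

theorem coeff_eq_zero_of_mem_ker (h2 : ∀ r : R, 2 * r = 0 → r = 0)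
    (hN : ∀ n ∈ σ.ker, n ^ 2 = 1) (hx : phiSigma σ x = -x) {g : G} (hg : g ∈ σ.ker) :
    x.coeff g = 0 := by
  have hneg := smul_coeff_of_phiSigma_eq_neg σ hx g
  rw [inv_eq_self_of_mem_ker σ hN hg, σ.mem_ker.mp hg, Units.val_one, one_smul] at hneg
  exact h2 _ (by linear_combination hneg)

theorem notMem_ker_of_mem_support (h2 : ∀ r : R, 2 * r = 0 → r = 0)
    (hN : ∀ n ∈ σ.ker, n ^ 2 = 1) (hx : phiSigma σ x = -x) {g : G}
    (hg : g ∈ x.coeff.support) : g ∉ σ.ker :=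
  fun hker => Finsupp.mem_support_iff.mp hg (coeff_eq_zero_of_mem_ker σ h2 hN hx hker)

theorem coeff_inv_of_phiSigma_eq_neg (h2 : ∀ r : R, 2 * r = 0 → r = 0)
    (hN : ∀ n ∈ σ.ker, n ^ 2 = 1) (hx : phiSigma σ x = -x) (g : G) :
    x.coeff g⁻¹ = x.coeff g := by
  by_cases hg : g ∈ σ.ker
  · rw [coeff_eq_zero_of_mem_ker σ h2 hN hx hg,
      coeff_eq_zero_of_mem_ker σ h2 hN hx (inv_mem hg)]
  · have hneg := smul_coeff_of_phiSigma_eq_neg σ hx g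
    rw [map_eq_neg_one_of_notMem_ker σ hg, Units.val_neg, Units.val_one, neg_one_smul] at hneg
    exact (neg_injective hneg).symm

end Orientation

theorem antisymm_commute_of_elementary_abelian_kernel_general
    {R : Type*} [CommRing R] {G : Type*} [Group G]
    (h2 : ∀ r : R, 2 * r = 0 → r = 0)
    (σ : G →* ℤˣ)
    (hN : ∀ n ∈ σ.ker, n ^ 2 = 1) :
    AntisymmCommute R G σ := fun _ _ hx hy =>
  MonoidAlgebra.mul_comm_of_coeff_inv (coeff_inv_of_phiSigma_eq_neg σ h2 hN hx)
    (coeff_inv_of_phiSigma_eq_neg σ h2 hN hy) fun _ hg _ hh =>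
    inv_mul_inv_eq_mul_of_notMem_ker σ hN (notMem_ker_of_mem_support σ h2 hN hx hg)
      (notMem_ker_of_mem_support σ h2 hN hy hh)

/-- If `G` is a nonabelian group of exponent 4, `R₂ = {0}`, and the kernel of the
nontrivial orientation `σ` is an elementary abelian 2-group, then `(RG)⁻` is commutative. -/
theorem antisymm_commute_of_elementary_abelian_kernel
    {R : Type*} [CommRing R] {G : Type*} [Group G]
    (hG : ∃ x y : G, x * y ≠ y * x) (hexp : Monoid.exponent G = 4)
    (h2 : ∀ r : R, 2 * r = 0 → r = 0)
    (σ : G →* ℤˣ) (hσ : σ.ker ≠ ⊤)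
    (hN : ∀ n ∈ σ.ker, n ^ 2 = 1) :
    AntisymmCommute R G σ :=
  antisymm_commute_of_elementary_abelian_kernel_general h2 σ hN
end

section
/- Let R be a commutative ring with char(R) ≠ 2 and let G be a Hamiltonian 2-group with a nontrivial orientation homomorphism σ and kernel N = ker(σ). Then: (1) if N is abelian, the set of antisymmetric elements (RG)⁻ under φ_σ is commutative; (2) if N is not abelian and char(R) = 4, then (RG)⁻ is commutative. -/
open Subgroup

/-- The elementary abelian 2-group on the index set `ι`; every elementary abelian 2-group
is of this form. -/
abbrev ElemAb2 (ι : Type) : Type := Multiplicative (ι →₀ ZMod 2)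

/-- A Hamiltonian 2-group: a group of the form `Q₈ × E` with `E` an elementary abelian
2-group. -/
def IsHamiltonian2Group (H : Type*) [Group H] : Prop :=
  ∃ ι : Type, Nonempty (H ≃* (QuaternionGroup 2 × ElemAb2 ι))

/-!
Every antisymmetric element is a sum of antisymmetric elements supported on a single pair
`{g, g⁻¹}`, so it suffices to show that two such elements `a`, `b` (on `{g, g⁻¹}` and `{h, h⁻¹}`)
commute. This is clear if `g` and `h` commute. Otherwise, in a Hamiltonian 2-group, `hg = s gh`,
`g⁻¹ = s g` and `h⁻¹ = s h` for the central element `s = (-1, 1)` of order 2, so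
`a = (1 - σ(g) s) g r` and `b = (1 - σ(h) s) h t`, and
`ab - ba = (1 - σ(g) s)(1 - σ(h) s)(1 - s) gh rt`. As `s² = 1`, this vanishes when `σ(g)` or
`σ(h)` is `-1`, and otherwise equals `4 (1 - s) gh rt`, which vanishes when `4 = 0` in `R`.
If `ker σ` is abelian, the case `σ(g) = σ(h) = 1` cannot occur for non-commuting `g`, `h`.
-/

structure IsSquareCommutator {G : Type*} [Group G] (s : G) : Prop where
  commute : ∀ g, Commute s g
  mul_self : s * s = 1
  of_not_commute : ∀ g h, ¬Commute g h → h * g = s * (g * h) ∧ g * g = s ∧ h * h = s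

namespace IsSquareCommutator

variable {G : Type*} [Group G] {s : G}

lemma inv_eq_mul (hs : IsSquareCommutator s) {g h : G} (hgh : ¬Commute g h) : g⁻¹ = s * g :=
  inv_eq_of_mul_eq_one_right <| by
    rw [← mul_assoc, ← (hs.commute g).eq, mul_assoc, (hs.of_not_commute g h hgh).2.1, hs.mul_self]

lemma inv_ne (hs : IsSquareCommutator s) {g h : G} (hgh : ¬Commute g h) : g⁻¹ ≠ g := by
  intro hg
  obtain ⟨hhg, hgg, -⟩ := hs.of_not_commute g h hgh
  have hs1 : s = 1 := hgg ▸ inv_eq_iff_mul_eq_one.mp hg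
  exact hgh (by rw [Commute, SemiconjBy, hhg, hs1, one_mul])

lemma map {H : Type*} [Group H] (hs : IsSquareCommutator s) (e : G ≃* H) :
    IsSquareCommutator (e s) := by
  have hcomm : ∀ g h : G, Commute (e g) (e h) ↔ Commute g h := fun g h => by
    simp only [Commute, SemiconjBy, ← map_mul, e.injective.eq_iff]
  refine ⟨e.surjective.forall.mpr fun g => (hcomm s g).mpr (hs.commute g),
    by rw [← map_mul, hs.mul_self, map_one], e.surjective.forall₂.mpr fun g h hgh => ?_⟩
  obtain ⟨hhg, hgg, hhh⟩ := hs.of_not_commute g h ((not_congr (hcomm g h)).mp hgh)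
  simp only [← map_mul, hhg, hgg, hhh, and_self]

lemma prod (hs : IsSquareCommutator s) {E : Type*} [CommGroup E] (hE : ∀ x : E, x * x = 1) :
    IsSquareCommutator (s, (1 : E)) := by
  refine ⟨fun x => Commute.prod (hs.commute x.1) (Commute.one_left x.2), by simp [hs.mul_self],
    fun x y hxy => ?_⟩
  have h1 : ¬Commute x.1 y.1 := fun h => hxy (Commute.prod h (Commute.all _ _))
  obtain ⟨hyx, hxx, hyy⟩ := hs.of_not_commute _ _ h1
  exact ⟨Prod.ext (by simpa using hyx) (by simp [mul_comm]), Prod.ext hxx (hE _),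
    Prod.ext hyy (hE _)⟩

end IsSquareCommutator

lemma isSquareCommutator_quaternionGroup :
    IsSquareCommutator (QuaternionGroup.a 2 : QuaternionGroup 2) := by
  refine ⟨?_, by decide, ?_⟩ <;> unfold Commute SemiconjBy <;> decide

lemma IsHamiltonian2Group.exists_isSquareCommutator {G : Type*} [Group G]
    (hG : IsHamiltonian2Group G) : ∃ s : G, IsSquareCommutator s := by
  obtain ⟨ι, ⟨e⟩⟩ := hG
  have hE : ∀ x : ElemAb2 ι, x * x = 1 := fun x =>
    Multiplicative.toAdd.injective <| by ext; simp [CharTwo.add_self_eq_zero]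
  exact ⟨_, (isSquareCommutator_quaternionGroup.prod hE).map e.symm⟩

lemma AddSubmonoid.commute_of_mem_closure {T : Type*} [Semiring T] {S : Set T}
    (hS : ∀ a ∈ S, ∀ b ∈ S, Commute a b) {x y : T}
    (hx : x ∈ AddSubmonoid.closure S) (hy : y ∈ AddSubmonoid.closure S) : Commute x y :=
  have hle : AddSubmonoid.closure S ≤ (Subsemiring.closure S).toAddSubmonoid :=
    AddSubmonoid.closure_le.mpr Subsemiring.subset_closure
  have hcc := Subsemiring.closure_le_centralizer_centralizer S
  Set.centralizer_centralizer_comm_of_comm (fun a ha b hb => (hS a ha b hb).eq)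
    x (hcc (hle hx)) y (hcc (hle hy))

lemma commute_mul_mul_of_mul_eq {T : Type*} [Ring T] {S P Q A B : T}
    (hAQ : Commute A Q) (hBP : Commute B P) (hPQ : Commute P Q)
    (hBA : B * A = S * (A * B)) (hPQS : P * Q * (1 - S) = 0) : Commute (P * A) (Q * B) :=
  calc P * A * (Q * B) = P * Q * (A * B) := by rw [mul_assoc, ← mul_assoc A, hAQ.eq]; noncomm_ring
    _ = P * Q * (A * B) - P * Q * (1 - S) * (A * B) := by rw [hPQS, zero_mul, sub_zero]
    _ = Q * P * (B * A) := by rw [hBA, hPQ.eq]; noncomm_ring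
    _ = Q * B * (P * A) := by rw [mul_assoc, ← mul_assoc P, ← hBP.eq]; noncomm_ring

lemma one_sub_zsmul_mul_one_sub_zsmul_mul_one_sub_eq_zero {T : Type*} [Ring T] {S : T}
    (hS : S * S = 1) (ε δ : ℤˣ) (h4 : ε = 1 → δ = 1 → (4 : T) = 0) :
    (1 - (ε : ℤ) • S) * (1 - (δ : ℤ) • S) * (1 - S) = 0 := by
  have hplus : (1 + S) * (1 - S) = 0 :=
    calc (1 + S) * (1 - S) = 1 - S * S := by noncomm_ring
      _ = 0 := by rw [hS, sub_self]
  rcases Int.units_eq_one_or ε with rfl | rfl <;> rcases Int.units_eq_one_or δ with rfl | rfl <;>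
    simp only [Units.val_one, Units.val_neg, one_smul, neg_smul, sub_neg_eq_add]
  · calc (1 - S) * (1 - S) * (1 - S) = 4 * (1 - S) + (S * S - 1) * (3 - S) := by noncomm_ring
      _ = 0 := by rw [h4 rfl rfl, hS]; noncomm_ring
  · rw [mul_assoc, hplus, mul_zero]
  · rw [hplus, zero_mul]
  · rw [mul_assoc, hplus, mul_zero]

lemma MonoidAlgebra.commute_of_forall_mem_support {R G : Type*} [CommSemiring R] [Mul G]
    {a b : MonoidAlgebra R G}
    (hab : ∀ g ∈ a.coeff.support, ∀ h ∈ b.coeff.support, Commute g h) : Commute a b := by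
  rw [← a.sum_coeff_single, ← b.sum_coeff_single]
  exact Commute.sum_left _ _ _ fun g hg => Commute.sum_right _ _ _ fun h hh =>
    MonoidAlgebra.single_commute_single (hab g hg h hh) (Commute.all _ _)

section Antisymmetric

variable {R : Type*} [CommRing R] {G : Type*} [Group G] (σ : G →* ℤˣ)

lemma coeff_phiSigma (x : MonoidAlgebra R G) (k : G) :
    (phiSigma σ x).coeff k = (σ k : ℤ) • x.coeff k⁻¹ := by
  unfold phiSigma
  rw [MonoidAlgebra.coeff_finsuppSum, Finsupp.sum_apply, Finsupp.sum, Finset.sum_eq_single k⁻¹]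
  · rw [inv_inv, MonoidAlgebra.coeff_single, Finsupp.single_eq_same, map_inv, Int.units_inv_eq_self]
  · intro g _ hg
    rw [MonoidAlgebra.coeff_single, Finsupp.single_apply_eq_zero]
    intro hgk
    exact absurd (by rw [hgk, inv_inv]) hg
  · intro h
    rw [Finsupp.notMem_support_iff.mp h, smul_zero, MonoidAlgebra.single_zero,
      MonoidAlgebra.coeff_zero, Finsupp.coe_zero, Pi.zero_apply]

lemma phiSigma_eq_neg_iff {x : MonoidAlgebra R G} :
    phiSigma σ x = -x ↔ ∀ g, x.coeff g⁻¹ = -((σ g : ℤ) • x.coeff g) := by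
  have hinv : ∀ (g : G) (r : R), (σ g : ℤ) • (σ g : ℤ) • r = r := fun g r => by
    rw [smul_smul, Int.units_coe_mul_self, one_smul]
  simp only [MonoidAlgebra.ext_iff, Finsupp.ext_iff, coeff_phiSigma, MonoidAlgebra.coeff_neg,
    Finsupp.neg_apply]
  refine ⟨fun h g => ?_, fun h k => by rw [h, smul_neg, hinv]⟩
  rw [← hinv g (x.coeff g⁻¹), h g, smul_neg]

def antisymmGenerators : Set (MonoidAlgebra R G) :=
  {a | phiSigma σ a = -a ∧ ∃ g, ∀ k ∈ a.coeff.support, k = g ∨ k = g⁻¹}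

variable {σ}

lemma phiSigma_ofCoeff_filter {x : MonoidAlgebra R G} (hx : phiSigma σ x = -x)
    (p : G → Prop) [DecidablePred p] (hp : ∀ g, p g⁻¹ ↔ p g) :
    phiSigma σ (.ofCoeff (x.coeff.filter p)) = -.ofCoeff (x.coeff.filter p) := by
  rw [phiSigma_eq_neg_iff] at hx ⊢
  intro g
  simp only [Finsupp.filter_apply, hp]
  split_ifs <;> simp [hx]

lemma mem_closure_antisymmGenerators {x : MonoidAlgebra R G} (hx : phiSigma σ x = -x) :
    x ∈ AddSubmonoid.closure (antisymmGenerators σ) := by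
  classical
  induction hn : x.coeff.support.card using Nat.strong_induction_on generalizing x with
  | _ n ih =>
  rcases x.coeff.support.eq_empty_or_nonempty with h0 | ⟨g, hg⟩
  · rw [MonoidAlgebra.coeff_eq_zero.mp (Finsupp.support_eq_empty.mp h0)]
    exact zero_mem _
  let p : G → Prop := fun k => k = g ∨ k = g⁻¹
  have hp : ∀ k, p k⁻¹ ↔ p k := fun k => by simp only [p, inv_eq_iff_eq_inv, inv_inv, or_comm]
  rw [← MonoidAlgebra.ofCoeff_coeff x, ← x.coeff.filter_add_filter_not p,
    MonoidAlgebra.ofCoeff_add]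
  refine add_mem (AddSubmonoid.subset_closure ⟨phiSigma_ofCoeff_filter hx p hp, g, fun k hk => ?_⟩)
    (ih _ ?_ (phiSigma_ofCoeff_filter hx _ fun k => not_congr (hp k)) rfl)
  · rw [MonoidAlgebra.coeff_ofCoeff, Finsupp.support_filter, Finset.mem_filter] at hk
    exact hk.2
  · rw [← hn, MonoidAlgebra.coeff_ofCoeff, Finsupp.support_filter]
    exact Finset.card_lt_card (Finset.filter_ssubset.mpr ⟨g, hg, not_not.mpr (Or.inl rfl)⟩)

lemma eq_one_sub_smul_mul_single {a : MonoidAlgebra R G} (ha : phiSigma σ a = -a) {s g : G}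
    (hsupp : ∀ k ∈ a.coeff.support, k = g ∨ k = g⁻¹) (hg : g⁻¹ = s * g) (hne : g⁻¹ ≠ g) :
    a = (1 - (σ g : ℤ) • MonoidAlgebra.single s 1) * MonoidAlgebra.single g (a.coeff g) := by
  rw [phiSigma_eq_neg_iff] at ha
  rw [sub_mul, one_mul, smul_mul_assoc, MonoidAlgebra.single_mul_single, one_mul, ← hg,
    MonoidAlgebra.smul_single]
  ext k
  simp only [MonoidAlgebra.coeff_sub, MonoidAlgebra.coeff_single, Finsupp.sub_apply]
  by_cases hkg : k = g
  · subst hkg; simp [hne]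
  by_cases hkg' : k = g⁻¹
  · subst hkg'; simp [hne, ha g]
  have hk : a.coeff k = 0 := Finsupp.notMem_support_iff.mp fun hk => (hsupp k hk).elim hkg hkg'
  simp [hk, Ne.symm hkg, Ne.symm hkg']

lemma commute_of_mem_antisymmGenerators {s : G} (hs : IsSquareCommutator s)
    (h4 : ∀ g h, ¬Commute g h → σ g = 1 → σ h = 1 → (4 : R) = 0) {a b : MonoidAlgebra R G}
    (ha : a ∈ antisymmGenerators σ) (hb : b ∈ antisymmGenerators σ) : Commute a b := by
  obtain ⟨ha, g, hag⟩ := ha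
  obtain ⟨hb, h, hbh⟩ := hb
  by_cases hgh : Commute g h
  · refine MonoidAlgebra.commute_of_forall_mem_support fun k hk l hl => ?_
    rcases hag k hk with rfl | rfl <;> rcases hbh l hl with rfl | rfl
    exacts [hgh, hgh.inv_right, hgh.inv_left, hgh.inv_inv]
  set S : MonoidAlgebra R G := .single s 1
  have hS : ∀ y, Commute S y := MonoidAlgebra.single_commute hs.commute (Commute.all 1)
  have hcentral : ∀ (ε : ℤ) y, Commute (1 - ε • S) y := fun ε y =>
    (Commute.one_left y).sub_left ((hS y).smul_left ε)
  have hhg : ¬Commute h g := fun c => hgh c.symm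
  rw [eq_one_sub_smul_mul_single ha hag (hs.inv_eq_mul hgh) (hs.inv_ne hgh),
    eq_one_sub_smul_mul_single hb hbh (hs.inv_eq_mul hhg) (hs.inv_ne hhg)]
  refine commute_mul_mul_of_mul_eq (hcentral _ _).symm (hcentral _ _).symm (hcentral _ _) ?_
    (one_sub_zsmul_mul_one_sub_zsmul_mul_one_sub_eq_zero ?_ _ _ fun hg hh => ?_)
  · rw [MonoidAlgebra.single_mul_single, MonoidAlgebra.single_mul_single,
      MonoidAlgebra.single_mul_single, (hs.of_not_commute g h hgh).1, mul_comm (b.coeff h), one_mul]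
  · rw [MonoidAlgebra.single_mul_single, hs.mul_self, one_mul, MonoidAlgebra.one_def]
  · rw [← map_ofNat (algebraMap R (MonoidAlgebra R G)), h4 g h hgh hg hh, map_zero]

theorem antisymmCommute_of_isSquareCommutator {s : G} (hs : IsSquareCommutator s)
    (h4 : ∀ g h, ¬Commute g h → σ g = 1 → σ h = 1 → (4 : R) = 0) : AntisymmCommute R G σ :=
  fun _ _ hx hy => (AddSubmonoid.commute_of_mem_closure
    (fun _ ha _ hb => commute_of_mem_antisymmGenerators hs h4 ha hb)
    (mem_closure_antisymmGenerators hx) (mem_closure_antisymmGenerators hy)).eq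

end Antisymmetric

theorem antisymm_commute_of_hamiltonian_general
    {R : Type*} [CommRing R] {G : Type*} [Group G]
    (hG : IsHamiltonian2Group G)
    (σ : G →* ℤˣ) :
    ((∀ x ∈ σ.ker, ∀ y ∈ σ.ker, x * y = y * x) → AntisymmCommute R G σ) ∧
    ((¬ ∀ x ∈ σ.ker, ∀ y ∈ σ.ker, x * y = y * x) → ringChar R = 4 →
      AntisymmCommute R G σ) := by
  obtain ⟨s, hs⟩ := hG.exists_isSquareCommutator
  refine ⟨fun hN => antisymmCommute_of_isSquareCommutator hs fun g h hgh hg hh => ?_,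
    fun _ hchar => antisymmCommute_of_isSquareCommutator hs fun _ _ _ _ _ => ?_⟩
  · exact absurd (hN g hg h hh) hgh
  · exact_mod_cast hchar ▸ ringChar.Nat.cast_ringChar

/-- For a Hamiltonian 2-group `G` with nontrivial orientation `σ` and kernel `N = ker σ`:
(1) if `N` is abelian then `(RG)⁻` is commutative; (2) if `N` is not abelian and
`char R = 4` then `(RG)⁻` is commutative. -/
theorem antisymm_commute_of_hamiltonian
    {R : Type*} [CommRing R] {G : Type*} [Group G]
    (hR : ringChar R ≠ 2) (hG : IsHamiltonian2Group G)
    (σ : G →* ℤˣ) (hσ : σ.ker ≠ ⊤) :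
    ((∀ x ∈ σ.ker, ∀ y ∈ σ.ker, x * y = y * x) → AntisymmCommute R G σ) ∧
    ((¬ ∀ x ∈ σ.ker, ∀ y ∈ σ.ker, x * y = y * x) → ringChar R = 4 →
      AntisymmCommute R G σ) :=
  antisymm_commute_of_hamiltonian_general hG σ
end
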